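/- arXiv:2403.18808 — 7 statements merged into one kernel-verified Lean document; each statement's English description precedes it below -/
import Mathlib

section
/- With the same hypotheses as before (a a primitive axis with eigenvalues in {0,1,1/2} and Frobenius form normalized by (a,a)=1), for every x ∈ A we have τ_a(x) = x + 4(a,x)·a − 4·a·x. -/
/-- STATEMENT 0: For a primitive Jordan-type-1/2 axis `a` in a commutative nonassociative
algebra with Frobenius form, `a·x = (1/4)(x − τ_a x) + (a,x)·a`. -/
theorem stmt_1 {F A : Type*} [Field F] [NonUnitalNonAssocCommRing A]
    [Module F A] [SMulCommClass F A A] [IsScalarTower F A A]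
    (hchar : (2 : F) ≠ 0)
    (B : A →ₗ[F] A →ₗ[F] F)
    (hsym : ∀ x y : A, B x y = B y x)
    (hfrob : ∀ x y z : A, B x (y * z) = B (x * y) z)
    (a : A) (ha : a * a = a) (haa : B a a = 1)
    (hdiag : ∀ x : A, ∃ (t : F) (x0 xh : A),
      x = t • a + x0 + xh ∧ a * x0 = 0 ∧ a * xh = (2⁻¹ : F) • xh)
    (τ : A →ₗ[F] A)
    (hτ0 : ∀ x : A, a * x = 0 → τ x = x)
    (hτ1 : τ a = a)
    (hτh : ∀ x : A, a * x = (2⁻¹ : F) • x → τ x = -x) :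
    ∀ x : A, τ x = x + (4 * B a x) • a - (4 : F) • (a * x) := by
  intro x
  obtain ⟨t, x0, xh, hx, h0, hh⟩ := hdiag x
  have hinv : (2⁻¹ : F) ≠ 0 := inv_ne_zero hchar
  -- B a x0 = 0
  have hB0 : B a x0 = 0 := by
    have : B a x0 = B a (a * x0) := by rw [hfrob a a x0, ha]
    rw [h0, map_zero] at this
    exact this
  -- B a xh = 0
  have hBh : B a xh = 0 := by
    have h1 : B a xh = (2⁻¹ : F) * B a xh := by
      conv_lhs => rw [← ha]
      rw [← hfrob a a xh, hh, map_smul, smul_eq_mul]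
    have h2 : (2 : F) * B a xh = (2 : F) * ((2⁻¹ : F) * B a xh) := by rw [← h1]
    rw [← mul_assoc, mul_inv_cancel₀ hchar, one_mul] at h2
    linear_combination h2
  have hBax : B a x = t := by
    rw [hx]
    simp [map_smul, hB0, hBh, haa]
  have hax : a * x = t • a + (2⁻¹ : F) • xh := by
    rw [hx]
    rw [mul_add, mul_add, mul_smul_comm, ha, h0, hh, add_zero]
  have hτx : τ x = t • a + x0 - xh := by
    rw [hx, map_add, map_add, map_smul, hτ1, hτ0 x0 h0, hτh xh hh]
    abel
  rw [hτx, hBax, hax, hx]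
  match_scalars <;> (field_simp; try ring)
end

section
/- Let a be a primitive axis (idempotent with ad(a) diagonalizable, eigenvalues in {0,1,1/2}, 1-eigenspace spanned by a) in a commutative nonassociative algebra A over a field of characteristic ≠ 2 with Frobenius form normalized so (a,a) = 1. Then for every x ∈ A, a·(a·x) = (1/2)(a·x + (a,x)·a). -/
/-- For a primitive Jordan-type-1/2 axis `a`,
`a·(a·x) = (1/2)(a·x + (a,x)·a)`. -/
theorem stmt_2 {F A : Type*} [Field F] [NonUnitalNonAssocCommRing A]
    [Module F A] [SMulCommClass F A A] [IsScalarTower F A A]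
    (hchar : (2 : F) ≠ 0)
    (B : A →ₗ[F] A →ₗ[F] F)
    (hsym : ∀ x y : A, B x y = B y x)
    (hfrob : ∀ x y z : A, B x (y * z) = B (x * y) z)
    (a : A) (ha : a * a = a) (haa : B a a = 1)
    (hdiag : ∀ x : A, ∃ (t : F) (x0 xh : A),
      x = t • a + x0 + xh ∧ a * x0 = 0 ∧ a * xh = (2⁻¹ : F) • xh) :
    ∀ x : A, a * (a * x) = (2⁻¹ : F) • (a * x + (B a x) • a) := by
  intro x
  obtain ⟨t, x0, xh, hx, h0, hh⟩ := hdiag x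
  have hBx0 : B a x0 = 0 := by
    have h := hfrob a a x0
    rw [h0, ha, map_zero] at h
    exact h.symm
  have hBxh : B a xh = 0 := by
    have h := hfrob a a xh
    rw [hh, ha, map_smul] at h
    have h2 : B a xh = 2 * B a xh := by
      have := congrArg (fun c => (2 : F) * c) h
      simpa [smul_eq_mul, ← mul_assoc, mul_inv_cancel₀ hchar] using this
    linear_combination -h2
  have hBax : B a x = t := by
    rw [hx, map_add, map_add, map_smul, haa, hBx0, hBxh, smul_eq_mul]
    ring
  have hax : a * x = t • a + (2⁻¹ : F) • xh := by
    rw [hx, mul_add, mul_add, mul_smul_comm, ha, h0, hh, add_zero]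
  rw [hBax, hax, mul_add, mul_smul_comm, mul_smul_comm, ha, hh]
  rw [smul_smul, smul_add, smul_add, smul_smul, smul_smul]
  match_scalars <;> field_simp <;> ring
end

section
/- Let F be a field of characteristic ≠ 2 and let B be the commutative F-algebra with basis {a, b, v} and multiplication a·a = a, b·b = b, a·b = v, a·v = (1/2)v, b·v = (1/2)v, v·v = 0. For λ ∈ F set a_λ = a + λv and b_λ = b + λv. Then every a_λ and b_λ is an idempotent, and conversely every idempotent c ∈ B with c ∉ {0} and c not equal to a sum of two orthogonal idempotents of this family (i.e., every primitive idempotent) is of the form a_λ or b_λ for some λ ∈ F. -/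
/-- The flat algebra `J(0)` on basis `{a, b, v}` realized on `F × F × F`
(coordinates: coefficient of `a`, of `b`, of `v`), with multiplication
`a·a = a`, `b·b = b`, `a·b = v`, `a·v = (1/2)v`, `b·v = (1/2)v`, `v·v = 0`. -/
def fmul {F : Type*} [Field F] (x y : F × F × F) : F × F × F :=
  (x.1 * y.1, x.2.1 * y.2.1,
   x.1 * y.2.1 + x.2.1 * y.1 + (x.1 * y.2.2 + x.2.2 * y.1) / 2
     + (x.2.1 * y.2.2 + x.2.2 * y.2.1) / 2)

/-- `a_λ = a + λv`. -/
def aF {F : Type*} [Field F] (lam : F) : F × F × F := (1, 0, lam)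

/-- `b_λ = b + λv`. -/
def bF {F : Type*} [Field F] (lam : F) : F × F × F := (0, 1, lam)

/-- in the flat algebra, every `a_λ` and `b_λ` is idempotent, and every
idempotent `c ≠ 0` which is not a sum of two orthogonal idempotents of this family
(i.e. every primitive idempotent) is of the form `a_λ` or `b_λ`. -/
theorem stmt_6 {F : Type*} [Field F] (hchar : (2 : F) ≠ 0) :
    (∀ lam : F, fmul (aF lam) (aF lam) = aF lam ∧ fmul (bF lam) (bF lam) = bF lam) ∧
    ∀ c : F × F × F, fmul c c = c → c ≠ 0 →
      (¬ ∃ lam mu : F, fmul (aF lam) (bF mu) = 0 ∧ c = aF lam + bF mu) →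
      ∃ lam : F, c = aF lam ∨ c = bF lam := by
  constructor
  · intro lam
    constructor <;>
      · simp only [fmul, aF, bF, Prod.ext_iff]
        norm_num
        field_simp
        ring
  · rintro ⟨α, β, γ⟩ hc hne hnot
    simp only [fmul, Prod.ext_iff, Prod.mk.injEq] at hc
    obtain ⟨h1, h2, h3⟩ := hc
    have hα : α = 0 ∨ α = 1 := by
      rcases mul_eq_zero.mp (show α * (α - 1) = 0 by linear_combination h1) with h | h
      · exact Or.inl h
      · exact Or.inr (sub_eq_zero.mp h)
    have hβ : β = 0 ∨ β = 1 := by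
      rcases mul_eq_zero.mp (show β * (β - 1) = 0 by linear_combination h2) with h | h
      · exact Or.inl h
      · exact Or.inr (sub_eq_zero.mp h)
    rcases hα with hα | hα <;> rcases hβ with hβ | hβ
    · exfalso
      apply hne
      subst hα hβ
      have hγ : γ = 0 := by linear_combination -h3
      simp [hγ, Prod.ext_iff]
    · exact ⟨γ, Or.inr (by simp [bF, hα, hβ])⟩
    · exact ⟨γ, Or.inl (by simp [aF, hα, hβ])⟩
    · exfalso
      apply hnot
      subst hα hβ
      have hγ : γ = -2 := by
        field_simp at h3
        have h4 : 2 * (2 + 2 * γ) = 2 * γ := by linear_combination h3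
        have h5 : 2 + 2 * γ = γ := mul_left_cancel₀ hchar h4
        linear_combination h5
      refine ⟨-1, -1, ?_, ?_⟩
      · simp only [fmul, aF, bF, Prod.ext_iff, Prod.mk.injEq, Prod.fst_zero, Prod.snd_zero]
        refine ⟨by ring, by ring, ?_⟩
        field_simp
        ring
      · subst hγ
        show ((1:F), (1:F), (-2:F)) = _
        simp only [aF, bF, Prod.mk_add_mk, Prod.mk.injEq]
        norm_num
end

section
/- Let F be a field with char F ≠ 2 and B the algebra with basis {a,b,v}, multiplication a² = a, b² = b, a·b = v, a·v = b·v = (1/2)v, v² = 0. Let (·,·) be the symmetric bilinear form with (a,a) = (b,b) = 1, (a,b) = 0, (a,v) = (b,v) = (v,v) = 0. For μ ∈ F define τ_{a_μ}(x) = x + 4(a_μ,x)a_μ − 4a_μ·x where a_μ = a + μv. Then for all λ, μ ∈ F: τ_{a_μ}(a_λ) = a_{2μ−λ}, and τ_{b_μ}(a_λ) = a_{−4−2μ−λ} (with b_μ = b + μv and τ_{b_μ} defined analogously). -/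
/-- Frobenius form: `(a,a) = (b,b) = 1`, all other pairings of basis vectors `0`. -/
def fform {F : Type*} [Field F] (x y : F × F × F) : F :=
  x.1 * y.1 + x.2.1 * y.2.1

/-- Miyamoto map `τ_c(x) = x + 4(c,x)c − 4·c·x`. -/
def ftau {F : Type*} [Field F] (c x : F × F × F) : F × F × F :=
  x + (4 * fform c x) • c - (4 : F) • fmul c x

/-- `τ_{a_μ}(a_λ) = a_{2μ−λ}` and `τ_{b_μ}(a_λ) = a_{−4−2μ−λ}`. -/
theorem stmt_7 {F : Type*} [Field F] (hchar : (2 : F) ≠ 0) (lam mu : F) :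
    ftau (aF mu) (aF lam) = aF (2 * mu - lam) ∧
    ftau (bF mu) (aF lam) = aF (-4 - 2 * mu - lam) := by
  constructor <;> · simp only [ftau, fform, fmul, aF, bF, Prod.ext_iff, Prod.smul_def, Prod.mk_add_mk, Prod.mk_sub_mk, smul_eq_mul] <;> refine ⟨by ring, by ring, ?_⟩ <;> field_simp <;> ring
end

section
/- Let F be a field of characteristic ≠ 2, and let A be a commutative nonassociative F-algebra with a Frobenius form (·,·). Let c ∈ A be an idempotent with (c,c) = 1, and define φ_c : A → A by φ_c(x) = x + 4(c,x)c − 4cx. Suppose that for all x, y ∈ A: Q_x(c) := c(cx) − (1/2)(cx + (c,x)c) = 0 and P_{x,y}(c) := 4(cx)(cy) − (c,y)cx − (cy)x − (c,x)cy − (cx)y − (c,xy)c + c(xy) = 0. Then φ_c is an algebra homomorphism: φ_c(x)·φ_c(y) = φ_c(xy) for all x, y ∈ A. -/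
/-- if an idempotent `c` with `(c,c)=1` satisfies `Q_x(c) = 0` and
`P_{x,y}(c) = 0` for all `x, y`, then `φ_c(x) = x + 4(c,x)c − 4cx` is multiplicative. -/
theorem stmt_9 {F A : Type*} [Field F] [NonUnitalNonAssocCommRing A]
    [Module F A] [SMulCommClass F A A] [IsScalarTower F A A]
    (hchar : (2 : F) ≠ 0)
    (B : A →ₗ[F] A →ₗ[F] F)
    (hsym : ∀ x y : A, B x y = B y x)
    (hfrob : ∀ x y z : A, B x (y * z) = B (x * y) z)
    (c : A) (hc : c * c = c) (hcc : B c c = 1)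
    (hQ : ∀ x : A, c * (c * x) - (2⁻¹ : F) • (c * x + (B c x) • c) = 0)
    (hP : ∀ x y : A,
      (4 : F) • ((c * x) * (c * y)) - (B c y) • (c * x) - (c * y) * x
        - (B c x) • (c * y) - (c * x) * y - (B c (x * y)) • c + c * (x * y) = 0) :
    ∀ x y : A,
      (x + (4 * B c x) • c - (4 : F) • (c * x)) * (y + (4 * B c y) • c - (4 : F) • (c * y))
        = x * y + (4 * B c (x * y)) • c - (4 : F) • (c * (x * y)) := by
  intro x y
  have eQ : ∀ z : A, c * (c * z) = (2⁻¹ : F) • (c * z) + (2⁻¹ * B c z) • c := by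
    intro z
    have h := hQ z
    rw [sub_eq_zero] at h
    rw [h, smul_add, smul_smul]
  have h4 : (4 : F) ≠ 0 := by
    have : (4 : F) = 2 * 2 := by norm_num
    rw [this]; exact mul_ne_zero hchar hchar
  have eP : (c * x) * (c * y) = (4⁻¹ : F) • ((B c y) • (c * x) + (c * y) * x
      + (B c x) • (c * y) + (c * x) * y + (B c (x * y)) • c - c * (x * y)) := by
    have h := hP x y
    have h4' : (4 : F) • ((c * x) * (c * y)) = (B c y) • (c * x) + (c * y) * x
        + (B c x) • (c * y) + (c * x) * y + (B c (x * y)) • c - c * (x * y) := by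
      linear_combination (norm := abel) h
    rw [← h4', smul_smul, inv_mul_cancel₀ h4, one_smul]
  simp only [sub_mul, mul_sub, add_mul, mul_add, smul_mul_assoc, mul_smul_comm, smul_smul,
    smul_add, smul_sub]
  rw [mul_comm x c, mul_comm (c * x) c, mul_comm x (c * y), hc, eQ x, eQ y, eP]
  simp only [smul_add, smul_sub, smul_smul]
  match_scalars <;> field_simp <;> ring
end

section
/- Conversely, in the same setting, if c is a primitive axis of Jordan type 1/2 in A (ad(c) diagonalizable with eigenvalues in {0,1,1/2}, 1-eigenspace spanned by c, (c,c) = 1, and the map φ_c(x) = x + 4(c,x)c − 4cx is an algebra automorphism), then Q_x(c) = 0 and P_{x,y}(c) = 0 for all x, y ∈ A. -/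
/-- if `c` is a primitive Jordan-type-1/2 axis (with `(c,c) = 1`) and the
map `φ_c(x) = x + 4(c,x)c − 4cx` is an algebra automorphism, then `Q_x(c) = 0` and
`P_{x,y}(c) = 0` for all `x, y ∈ A`. -/
theorem stmt_10 {F A : Type*} [Field F] [NonUnitalNonAssocCommRing A]
    [Module F A] [SMulCommClass F A A] [IsScalarTower F A A]
    (hchar : (2 : F) ≠ 0)
    (B : A →ₗ[F] A →ₗ[F] F)
    (hsym : ∀ x y : A, B x y = B y x)
    (hfrob : ∀ x y z : A, B x (y * z) = B (x * y) z)
    (c : A) (hc : c * c = c) (hcc : B c c = 1)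
    (hdiag : ∀ x : A, ∃ (t : F) (x0 xh : A),
      x = t • c + x0 + xh ∧ c * x0 = 0 ∧ c * xh = (2⁻¹ : F) • xh)
    (hbij : Function.Bijective (fun x : A => x + (4 * B c x) • c - (4 : F) • (c * x)))
    (hmult : ∀ x y : A,
      (x + (4 * B c x) • c - (4 : F) • (c * x)) * (y + (4 * B c y) • c - (4 : F) • (c * y))
        = x * y + (4 * B c (x * y)) • c - (4 : F) • (c * (x * y))) :
    ∀ x y : A,
      c * (c * x) - (2⁻¹ : F) • (c * x + (B c x) • c) = 0 ∧
      (4 : F) • ((c * x) * (c * y)) - (B c y) • (c * x) - (c * y) * x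
        - (B c x) • (c * y) - (c * x) * y - (B c (x * y)) • c + c * (x * y) = 0 := by
  have hQ : ∀ z : A, c * (c * z) = (2⁻¹ : F) • (c * z + (B c z) • c) := by
    intro x
    obtain ⟨t, x0, xh, hx, h0, hh⟩ := hdiag x
    have hb0 : B c x0 = 0 := by
      have := hfrob c c x0
      rw [hc, h0, map_zero] at this
      exact this.symm
    have hbh : B c xh = 0 := by
      have h := hfrob c c xh
      rw [hc, hh, map_smul, smul_eq_mul] at h
      have h2 : (2⁻¹ - 1 : F) * B c xh = 0 := by linear_combination h
      have hne : (2⁻¹ - 1 : F) ≠ 0 := by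
        intro h3
        have h4 : (2⁻¹ : F) = 1 := sub_eq_zero.mp h3
        have h5 : (1 : F) = 2 := by
          calc (1:F) = 2⁻¹ * 2 := (inv_mul_cancel₀ hchar).symm
          _ = 1 * 2 := by rw [h4]
          _ = 2 := one_mul 2
        have h6 : (1 : F) = 0 := by linear_combination -h5
        exact one_ne_zero h6
      exact (mul_eq_zero.mp h2).resolve_left hne
    have hbx : B c x = t := by
      rw [hx]
      simp [hb0, hbh, hcc]
    have hcx : c * x = t • c + (2⁻¹ : F) • xh := by
      rw [hx, mul_add, mul_add, mul_smul_comm, hc, h0, hh, add_zero]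
    rw [hcx, hbx, mul_add, mul_smul_comm, mul_smul_comm, hc, hh]
    rw [smul_add, smul_add, smul_smul, smul_smul]
    match_scalars <;> (field_simp; try ring)
  intro x y
  refine ⟨by rw [hQ x]; exact sub_self _, ?_⟩
  have E := hmult x y
  simp only [sub_mul, mul_sub, add_mul, mul_add, smul_mul_assoc, mul_smul_comm, smul_smul,
    smul_sub, smul_add, hc, hQ, mul_comm x c, mul_comm y c, mul_comm x (c*y),
    mul_comm (c*x) c] at E
  have h4 : (4 : F) ≠ 0 := by
    have h2 := mul_ne_zero hchar hchar
    norm_num at h2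
    exact h2
  have key : (4 : F) • ((4 : F) • ((c * x) * (c * y)) - (B c y) • (c * x) - (c * y) * x
        - (B c x) • (c * y) - (c * x) * y - (B c (x * y)) • c + c * (x * y)) = 0 := by
    have h1 : (1 : F) = 2⁻¹ * 2 := (inv_mul_cancel₀ hchar).symm
    linear_combination (norm := module) E - h1 • ((8 * B c x) • (c * y) + (8 * B c y) • (c * x)
      + (16 * B c x * B c y) • c)
  have := congrArg (fun z : A => (4⁻¹ : F) • z) key
  simpa [inv_smul_smul₀ h4] using this
end

section
/- Let R be a commutative nonassociative ring in which 2 is invertible. Then R satisfies the almost Jordan identity 2((y·x)·x)·x + y·x³ = 3(y·x²)·x for all x, y ∈ R if and only if for all a, b ∈ R the map D_{a,b} : R → R, D_{a,b}(z) = a(zb) − b(za), is a derivation of R. -/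
set_option maxHeartbeats 4000000 in
/-- a commutative nonassociative ring `R` in which `2` is invertible
satisfies the almost Jordan identity `2((yx)x)x + yx³ = 3(yx²)x` if and only if each
`D_{a,b}(z) = a(zb) − b(za)` is a derivation of `R`. -/
theorem stmt_15 {R : Type*} [NonAssocRing R]
    (hcomm : ∀ x y : R, x * y = y * x)
    (h2 : ∃ t : R, 2 * t = 1) :
    (∀ x y : R, 2 * (((y * x) * x) * x) + y * ((x * x) * x) = 3 * ((y * (x * x)) * x)) ↔
      (∀ a b z w : R,
        a * ((z * w) * b) - b * ((z * w) * a)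
          = (a * (z * b) - b * (z * a)) * w + z * (a * (w * b) - b * (w * a))) := by
  obtain ⟨t, ht⟩ := h2
  have half : ∀ u : R, 2 * u = 0 → u = 0 := by
    intro u hu
    calc u = 1 * u := (one_mul u).symm
      _ = (2 * t) * u := by rw [ht]
      _ = t * u + t * u := by rw [two_mul, add_mul]
      _ = t * (u + u) := (mul_add t u u).symm
      _ = t * (2 * u) := by rw [two_mul]
      _ = t * 0 := by rw [hu]
      _ = 0 := mul_zero t
  have three_mul' : ∀ u : R, 3 * u = u + u + u := by
    intro u
    rw [← two_add_one_eq_three, add_mul, two_mul, one_mul]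
  constructor
  · intro hAJ a b z w
    have e : (2 * (((a * (b + w + z)) * (b + w + z)) * (b + w + z)) + a * (((b + w + z) * (b + w + z)) * (b + w + z))) - (2 * (((a * (b + w)) * (b + w)) * (b + w)) + a * (((b + w) * (b + w)) * (b + w))) - (2 * (((a * (b + z)) * (b + z)) * (b + z)) + a * (((b + z) * (b + z)) * (b + z))) - (2 * (((a * (w + z)) * (w + z)) * (w + z)) + a * (((w + z) * (w + z)) * (w + z))) + (2 * (((a * b) * b) * b) + a * ((b * b) * b)) + (2 * (((a * w) * w) * w) + a * ((w * w) * w)) + (2 * (((a * z) * z) * z) + a * ((z * z) * z)) - (2 * (((b * (a + w + z)) * (a + w + z)) * (a + w + z)) + b * (((a + w + z) * (a + w + z)) * (a + w + z))) + (2 * (((b * (a + w)) * (a + w)) * (a + w)) + b * (((a + w) * (a + w)) * (a + w))) + (2 * (((b * (a + z)) * (a + z)) * (a + z)) + b * (((a + z) * (a + z)) * (a + z))) + (2 * (((b * (w + z)) * (w + z)) * (w + z)) + b * (((w + z) * (w + z)) * (w + z))) - (2 * (((b * a) * a) * a) + b * ((a * a) * a)) - (2 * (((b * w) * w) * w) +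 b * ((w * w) * w)) - (2 * (((b * z) * z) * z) + b * ((z * z) * z))
        = (3 * ((a * ((b + w + z) * (b + w + z))) * (b + w + z))) - (3 * ((a * ((b + w) * (b + w))) * (b + w))) - (3 * ((a * ((b + z) * (b + z))) * (b + z))) - (3 * ((a * ((w + z) * (w + z))) * (w + z))) + (3 * ((a * (b * b)) * b)) + (3 * ((a * (w * w)) * w)) + (3 * ((a * (z * z)) * z)) - (3 * ((b * ((a + w + z) * (a + w + z))) * (a + w + z))) + (3 * ((b * ((a + w) * (a + w))) * (a + w))) + (3 * ((b * ((a + z) * (a + z))) * (a + z))) + (3 * ((b * ((w + z) * (w + z))) * (w + z))) - (3 * ((b * (a * a)) * a)) - (3 * ((b * (w * w)) * w)) - (3 * ((b * (z * z)) * z)) := by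
      rw [hAJ (b + w + z) a, hAJ (b + w) a, hAJ (b + z) a, hAJ (w + z) a, hAJ b a, hAJ w a, hAJ z a, hAJ (a + w + z) b, hAJ (a + w) b, hAJ (a + z) b, hAJ (w + z) b, hAJ a b, hAJ w b, hAJ z b]
    have k2 : 2 * (2 * (2 * ((a * ((z * w) * b) - b * ((z * w) * a)) - ((a * (z * b) - b * (z * a)) * w + z * (a * (w * b) - b * (w * a))))))
        = ((2 * (((a * (b + w + z)) * (b + w + z)) * (b + w + z)) + a * (((b + w + z) * (b + w + z)) * (b + w + z))) - (2 * (((a * (b + w)) * (b + w)) * (b + w)) + a * (((b + w) * (b + w)) * (b + w))) - (2 * (((a * (b + z)) * (b + z)) * (b + z)) + a * (((b + z) * (b + z)) * (b + z))) - (2 * (((a * (w + z)) * (w + z)) * (w + z)) + a * (((w + z) * (w + z)) * (w + z))) + (2 * (((a * b) * b) * b) + a * ((b * b) * b)) + (2 * (((a * w) * w) * w) + a * ((w * w) * w)) + (2 * (((a * z) * z) * z) + a * ((z * z) * z)) - (2 * (((b * (a + w + z)) * (a + w + z)) * (a + w + z)) + b * (((a + w + z) * (a + w + z)) * (a + w +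 z))) + (2 * (((b * (a + w)) * (a + w)) * (a + w)) + b * (((a + w) * (a + w)) * (a + w))) + (2 * (((b * (a + z)) * (a + z)) * (a + z)) + b * (((a + z) * (a + z)) * (a + z))) + (2 * (((b * (w + z)) * (w + z)) * (w + z)) + b * (((w + z) * (w + z)) * (w + z))) - (2 * (((b * a) * a) * a) + b * ((a * a) * a)) - (2 * (((b * w) * w) * w) + b * ((w * w) * w)) - (2 * (((b * z) * z) * z) + b * ((z * z) * z)))
          - ((3 * ((a * ((b + w + z) * (b + w + z))) * (b + w + z))) - (3 * ((a * ((b + w) * (b + w))) * (b + w))) - (3 * ((a * ((b + z) * (b + z))) * (b + z))) - (3 * ((a * ((w + z) * (w + z))) * (w + z))) + (3 * ((a * (b * b)) * b)) + (3 * ((a * (w * w)) * w)) + (3 * ((a * (z * z)) * z)) - (3 * ((b * ((a + w + z) * (a + w + z))) * (a + w + z))) + (3 * ((b * ((a + w) * (a + w))) * (a + w))) + (3 * ((b * ((a + z) * (a + z))) * (a + z))) + (3 * ((b * ((w + z) * (w + z))) * (w + z))) - (3 * ((b * (a * a)) * a)) - (3 * ((b * (w * w)) * w)) - (3 * ((b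 * (z * z)) * z))) := by
      simp only [mul_add, add_mul, mul_sub, sub_mul, two_mul, three_mul', hcomm b a, hcomm w a, hcomm w b, hcomm z a, hcomm z b, hcomm z w, hcomm (a * a) a, hcomm (a * a) w, hcomm (a * a) z, hcomm (a * b) a, hcomm (a * b) b, hcomm (a * b) w, hcomm (a * b) z, hcomm (a * w) a, hcomm (a * w) b, hcomm (a * w) w, hcomm (a * w) z, hcomm (a * z) a, hcomm (a * z) b, hcomm (a * z) w, hcomm (a * z) z, hcomm (a * (a * b)) a, hcomm (a * (a * b)) w, hcomm (a * (a * b)) z, hcomm (a * (b * b)) b, hcomm (a * (b * b)) w, hcomm (a * (b * b)) z, hcomm (a * (b * w)) a, hcomm (a * (b * w)) b, hcomm (a * (b * w)) w, hcomm (a * (b * w)) z, hcomm (a * (b * z)) a, hcomm (a * (b * z)) b, hcomm (a * (b * z)) w, hcomm (a * (b * z)) z, hcomm (a * (w * w)) b, hcomm (a * (w * w)) w, hcomm (a * (w * w)) z, hcomm (a * (w * z)) b, hcomm (a * (w * z)) w, hcomm (a * (w * z)) z, hcomm (a * (z * z)) b, hcomm (a * (z * z)) w, hcomm (a * (z * z))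 z, hcomm (b * b) b, hcomm (b * b) w, hcomm (b * b) z, hcomm (b * w) a, hcomm (b * w) b, hcomm (b * w) w, hcomm (b * w) z, hcomm (b * z) a, hcomm (b * z) b, hcomm (b * z) w, hcomm (b * z) z, hcomm (b * (a * a)) a, hcomm (b * (a * a)) w, hcomm (b * (a * a)) z, hcomm (b * (a * b)) b, hcomm (b * (a * b)) w, hcomm (b * (a * b)) z, hcomm (b * (a * w)) a, hcomm (b * (a * w)) b, hcomm (b * (a * w)) w, hcomm (b * (a * w)) z, hcomm (b * (a * z)) a, hcomm (b * (a * z)) b, hcomm (b * (a * z)) w, hcomm (b * (a * z)) z, hcomm (b * (w * w)) a, hcomm (b * (w * w)) w, hcomm (b * (w * w)) z, hcomm (b * (w * z)) a, hcomm (b * (w * z)) w, hcomm (b * (w * z)) z, hcomm (b * (z * z)) a, hcomm (b * (z * z)) w, hcomm (b * (z * z)) z, hcomm (w * w) a, hcomm (w * w) b, hcomm (w * w) w, hcomm (w * w) z, hcomm (w * z) a, hcomm (w * z) b, hcomm (w * z) w, hcomm (w * z) z, hcomm (w * (a * b)) a, hcomm (w * (a * b)) b, hcomm (w * (a * b)) w,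 hcomm (w * (a * b)) z, hcomm (w * (a * w)) b, hcomm (w * (a * w)) w, hcomm (w * (a * w)) z, hcomm (w * (a * z)) b, hcomm (w * (a * z)) w, hcomm (w * (a * z)) z, hcomm (w * (b * w)) a, hcomm (w * (b * w)) w, hcomm (w * (b * w)) z, hcomm (w * (b * z)) a, hcomm (w * (b * z)) w, hcomm (w * (b * z)) z, hcomm (z * z) a, hcomm (z * z) b, hcomm (z * z) w, hcomm (z * z) z, hcomm (z * (a * b)) a, hcomm (z * (a * b)) b, hcomm (z * (a * b)) w, hcomm (z * (a * b)) z, hcomm (z * (a * w)) b, hcomm (z * (a * w)) w, hcomm (z * (a * w)) z, hcomm (z * (a * z)) b, hcomm (z * (a * z)) w, hcomm (z * (a * z)) z, hcomm (z * (b * w)) a, hcomm (z * (b * w)) w, hcomm (z * (b * w)) z, hcomm (z * (b * z)) a, hcomm (z * (b * z)) w, hcomm (z * (b * z)) z]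
      abel
    have key : (a * ((z * w) * b) - b * ((z * w) * a)) - ((a * (z * b) - b * (z * a)) * w + z * (a * (w * b) - b * (w * a))) = 0 := by
      apply half; apply half; apply half
      rw [k2, e, sub_self]
    exact eq_of_sub_eq_zero key
  · intro hD x y
    have e := hD x y x x
    have k2 : (2 * (((y * x) * x) * x) + y * ((x * x) * x)) - (3 * ((y * (x * x)) * x)) = ((x * (x * y) - y * (x * x)) * x + x * (x * (x * y) - y * (x * x))) - (x * ((x * x) * y) - y * ((x * x) * x)) := by
      simp only [mul_add, add_mul, mul_sub, sub_mul, two_mul, three_mul', hcomm y x, hcomm (x * x) x, hcomm (x * x) y, hcomm (x * y) x, hcomm (x * (x * y)) x, hcomm (y * (x * x)) x]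
      abel
    have key : (2 * (((y * x) * x) * x) + y * ((x * x) * x)) - (3 * ((y * (x * x)) * x)) = 0 := by rw [k2, e, sub_self]
    exact eq_of_sub_eq_zero key
end
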